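/- Let F : ℝ → ℝ be L-Lipschitz and monotone nondecreasing on ℝ, with 0 < L < K, and let T(P) = P + (F_ref - F(P))/K. Then |(F∘T)(P) - F_ref| ≤ |F(P) - F_ref| for all P, i.e., the force error is nonincreasing under the update. -/
import Mathlib

/-- If `F` is `L`-Lipschitz and monotone nondecreasing on `ℝ` with `0 < L < K`,
then the force error is nonincreasing under the proportional update
`T P = P + (F_ref - F P)/K`. -/
theorem force_error_nonincreasing
    (F : ℝ → ℝ) (L K Fref : ℝ)
    (hLip : ∀ x y : ℝ, |F x - F y| ≤ L * |x - y|)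
    (hMono : Monotone F)
    (hL : 0 < L) (hLK : L < K) :
    ∀ P : ℝ, |F (P + (Fref - F P) / K) - Fref| ≤ |F P - Fref| := by
  intro P
  have hK : 0 < K := hL.trans hLK
  set Q := P + (Fref - F P) / K with hQ
  rcases le_or_gt Fref (F P) with h | h
  · -- error nonneg
    have he : 0 ≤ F P - Fref := by linarith
    have hTle : Q ≤ P := by
      have : (Fref - F P) / K ≤ 0 := div_nonpos_of_nonpos_of_nonneg (by linarith) hK.le
      simp [hQ]; linarith
    have h1 : F Q ≤ F P := hMono hTle
    have habs : |P - Q| = (F P - Fref) / K := by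
      rw [abs_of_nonneg]
      · simp [hQ]; ring
      · simp [hQ]
        have : (Fref - F P) / K ≤ 0 := div_nonpos_of_nonpos_of_nonneg (by linarith) hK.le
        linarith
    have h2 : F P - F Q ≤ L * ((F P - Fref) / K) := by
      have := hLip P Q
      rw [habs] at this
      calc F P - F Q ≤ |F P - F Q| := le_abs_self _
        _ ≤ _ := this
    have hsm : L * ((F P - Fref) / K) ≤ F P - Fref := by
      rw [mul_div_assoc'] at h2 ⊢
      rw [div_le_iff₀ hK]
      nlinarith
    rw [abs_of_nonneg he, abs_le]
    constructor <;> linarith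
  · have he : F P - Fref < 0 := by linarith
    have hTge : P ≤ Q := by
      have : 0 ≤ (Fref - F P) / K := div_nonneg (by linarith) hK.le
      simp [hQ]; linarith
    have h1 : F P ≤ F Q := hMono hTge
    have habs : |P - Q| = (Fref - F P) / K := by
      rw [abs_sub_comm, abs_of_nonneg]
      · simp [hQ]
      · simp [hQ]
        exact div_nonneg (by linarith) hK.le
    have h2 : F Q - F P ≤ L * ((Fref - F P) / K) := by
      have := hLip Q P
      rw [abs_sub_comm Q P, habs] at this
      calc F Q - F P ≤ |F Q - F P| := le_abs_self _
        _ ≤ _ := this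
    have hsm : L * ((Fref - F P) / K) ≤ Fref - F P := by
      rw [mul_div_assoc', div_le_iff₀ hK]
      nlinarith
    rw [abs_of_neg he, abs_le]
    constructor <;> linarith
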